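/- arXiv:1903.08792 — 2 statements merged into one kernel-verified Lean document; each statement's English description precedes it below -/
import Mathlib

section
/- Consider dynamics on ℝⁿ given by s_{t+1} = f(s_t) + g(s_t)·u(s_t) + d(s_t), with f : ℝⁿ → ℝⁿ, g : ℝⁿ → ℝ^{n×m}, d : ℝⁿ → ℝⁿ, and a feedback controller u : ℝⁿ → ℝᵐ. Let h(s) = pᵀs + q be an affine barrier function, η ∈ [0,1], k ≥ 0, and let μ, σ : ℝⁿ → ℝⁿ with σᵢ(s) ≥ 0 satisfy |dᵢ(s) − μᵢ(s)| ≤ k·σᵢ(s) for all s ∈ ℝⁿ and all i. Suppose that for every s with h(s) ≥ 0 the controller satisfies the robust barrier constraint pᵀf(s) + pᵀg(s)·u(s) + pᵀμ(s) − k·|p|ᵀσ(s) + q ≥ (1 − η)·h(s). Then for any trajectory (s_t) of the closed-loop system with h(s_0) ≥ 0, we have h(s_t) ≥ 0 for all t ∈ ℕ; i.e., the safe set C = {s : h(s) ≥ 0} is forward invariant. -/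
open Matrix

/-- Deterministic (confidence-bound-conditioned) statement of Lemma 1, first part:
if the controller `u` satisfies the robust barrier QP constraint (Equation 10 with zero
slack) at every state in the safe set `{s | h s ≥ 0}`, where `h s = pᵀ s + q`, and the
unknown dynamics `d` obeys the componentwise confidence bound `|dᵢ s - μᵢ s| ≤ k * σᵢ s`,
then any closed-loop trajectory `s (t+1) = f (s t) + g (s t) * u (s t) + d (s t)` starting
in the safe set remains in the safe set: the safe set is forward invariant. -/
theorem robust_cbf_forward_invariant {n m : ℕ}
    (f : (Fin n → ℝ) → (Fin n → ℝ))
    (g : (Fin n → ℝ) → Matrix (Fin n) (Fin m) ℝ)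
    (d μ σ : (Fin n → ℝ) → (Fin n → ℝ))
    (u : (Fin n → ℝ) → (Fin m → ℝ))
    (p : Fin n → ℝ) (q η k : ℝ)
    (hη : η ∈ Set.Icc (0 : ℝ) 1) (hk : k ≥ 0)
    (h : (Fin n → ℝ) → ℝ) (hh : ∀ s, h s = p ⬝ᵥ s + q)
    (hσ : ∀ s i, σ s i ≥ 0)
    (hconf : ∀ s i, |d s i - μ s i| ≤ k * σ s i)
    (hu : ∀ s, h s ≥ 0 →
      p ⬝ᵥ f s + p ⬝ᵥ (g s).mulVec (u s) + p ⬝ᵥ μ s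
        - k * ((fun i => |p i|) ⬝ᵥ σ s) + q ≥ (1 - η) * h s)
    (s : ℕ → (Fin n → ℝ))
    (hs : ∀ t : ℕ, s (t + 1) = f (s t) + (g (s t)).mulVec (u (s t)) + d (s t))
    (h0 : h (s 0) ≥ 0) :
    ∀ t : ℕ, h (s t) ≥ 0 := by
  intro t
  induction t with
  | zero => exact h0
  | succ t ih =>
    have key : p ⬝ᵥ (d (s t) - μ (s t)) ≥ -(k * ((fun i => |p i|) ⬝ᵥ σ (s t))) := by
      rw [ge_iff_le, neg_le, ← dotProduct_neg]
      calc p ⬝ᵥ (-(d (s t) - μ (s t)))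
          ≤ (fun i => |p i|) ⬝ᵥ fun i => |(-(d (s t) - μ (s t))) i| := by
            apply Finset.sum_le_sum
            intro i _
            calc p i * (-(d (s t) - μ (s t))) i
                ≤ |p i * (-(d (s t) - μ (s t))) i| := le_abs_self _
              _ = |p i| * |(-(d (s t) - μ (s t))) i| := abs_mul _ _
        _ ≤ k * ((fun i => |p i|) ⬝ᵥ σ (s t)) := by
            rw [show k * (fun i => |p i|) ⬝ᵥ σ (s t)
                = ∑ i, |p i| * (k * σ (s t) i) by
              rw [dotProduct, Finset.mul_sum]; apply Finset.sum_congr rfl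
              intro i _; ring]
            apply Finset.sum_le_sum
            intro i _
            have : |(-(d (s t) - μ (s t))) i| = |d (s t) i - μ (s t) i| := by
              simp [abs_sub_comm]
            simp only []
            rw [this]
            exact mul_le_mul_of_nonneg_left (hconf (s t) i) (abs_nonneg _)
    have expand : h (s (t + 1)) =
        p ⬝ᵥ f (s t) + p ⬝ᵥ (g (s t)).mulVec (u (s t)) + p ⬝ᵥ μ (s t)
          - k * ((fun i => |p i|) ⬝ᵥ σ (s t)) + q
          + (p ⬝ᵥ (d (s t) - μ (s t)) + k * ((fun i => |p i|) ⬝ᵥ σ (s t))) := by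
      rw [hh, hs t, dotProduct_add, dotProduct_add, dotProduct_sub]
      ring
    have step := hu (s t) ih
    have h1 : h (s (t + 1)) ≥ (1 - η) * h (s t) := by
      rw [expand]
      nlinarith [key]
    have : (1 - η) * h (s t) ≥ 0 := mul_nonneg (by linarith [hη.2]) ih
    linarith
end

section
/- Consider dynamics on ℝⁿ given by s_{t+1} = f(s_t) + g(s_t)·u(s_t) + d(s_t), with f : ℝⁿ → ℝⁿ, g : ℝⁿ → ℝ^{n×m}, d : ℝⁿ → ℝⁿ, and a feedback controller u : ℝⁿ → ℝᵐ. Let h(s) = pᵀs + q be an affine barrier function, η ∈ (0,1], ε^max ≥ 0, k ≥ 0, and let μ, σ : ℝⁿ → ℝⁿ with σᵢ(s) ≥ 0 satisfy |dᵢ(s) − μᵢ(s)| ≤ k·σᵢ(s) for all s and all i. Suppose that for every s with h(s) ≥ −ε^max/η the controller satisfies pᵀf(s) + pᵀg(s)·u(s) + pᵀμ(s) − k·|p|ᵀσ(s) + q ≥ (1 − η)·h(s) − ε^max. Then for any trajectory (s_t) of the closed-loop system with h(s_0) ≥ −ε^max/η, we have h(s_t) ≥ −ε^max/η for all t ∈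 ℕ; i.e., the enlarged set C_ε = {s : h(s) ≥ −ε^max/η} is forward invariant. -/
open Matrix

/-- Deterministic (confidence-bound-conditioned) statement of Lemma 1, second part:
if the robust barrier QP constraint can only be satisfied up to a maximal slack
`εmax ≥ 0` on the enlarged set `C_ε = {s | h s ≥ -εmax/η}` (with `η ∈ (0,1]`), then the
closed-loop system `s (t+1) = f (s t) + g (s t) * u (s t) + d (s t)` renders `C_ε`
forward invariant, given the componentwise confidence bound `|dᵢ s - μᵢ s| ≤ k * σᵢ s`. -/
theorem robust_cbf_relaxed_forward_invariant {n m : ℕ}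
    (f : (Fin n → ℝ) → (Fin n → ℝ))
    (g : (Fin n → ℝ) → Matrix (Fin n) (Fin m) ℝ)
    (d μ σ : (Fin n → ℝ) → (Fin n → ℝ))
    (u : (Fin n → ℝ) → (Fin m → ℝ))
    (p : Fin n → ℝ) (q η εmax k : ℝ)
    (hη : η ∈ Set.Ioc (0 : ℝ) 1) (hεmax : εmax ≥ 0) (hk : k ≥ 0)
    (h : (Fin n → ℝ) → ℝ) (hh : ∀ s, h s = p ⬝ᵥ s + q)
    (hσ : ∀ s i, σ s i ≥ 0)
    (hconf : ∀ s i, |d s i - μ s i| ≤ k * σ s i)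
    (hu : ∀ s, h s ≥ -εmax / η →
      p ⬝ᵥ f s + p ⬝ᵥ (g s).mulVec (u s) + p ⬝ᵥ μ s
        - k * ((fun i => |p i|) ⬝ᵥ σ s) + q ≥ (1 - η) * h s - εmax)
    (s : ℕ → (Fin n → ℝ))
    (hs : ∀ t : ℕ, s (t + 1) = f (s t) + (g (s t)).mulVec (u (s t)) + d (s t))
    (h0 : h (s 0) ≥ -εmax / η) :
    ∀ t : ℕ, h (s t) ≥ -εmax / η := by

  intro t
  induction t with
  | zero => exact h0
  | succ t ih =>
    obtain ⟨hη0, hη1⟩ := hη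
    have key := hu (s t) ih
    have hd : p ⬝ᵥ d (s t) ≥ p ⬝ᵥ μ (s t) - k * ((fun i => |p i|) ⬝ᵥ σ (s t)) := by
      have : p ⬝ᵥ μ (s t) - p ⬝ᵥ d (s t) ≤ k * ((fun i => |p i|) ⬝ᵥ σ (s t)) := by
        simp only [dotProduct, Finset.mul_sum, ← Finset.sum_sub_distrib]
        apply Finset.sum_le_sum
        intro i _
        calc p i * μ (s t) i - p i * d (s t) i = p i * (μ (s t) i - d (s t) i) := by ring
          _ ≤ |p i * (μ (s t) i - d (s t) i)| := le_abs_self _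
          _ = |p i| * |d (s t) i - μ (s t) i| := by rw [abs_mul, abs_sub_comm]
          _ ≤ |p i| * (k * σ (s t) i) := by
              exact mul_le_mul_of_nonneg_left (hconf (s t) i) (abs_nonneg _)
          _ = k * (|p i| * σ (s t) i) := by ring
      linarith
    have hstep : h (s (t + 1)) ≥ (1 - η) * h (s t) - εmax := by
      rw [hh, hs]
      have : p ⬝ᵥ (f (s t) + (g (s t)).mulVec (u (s t)) + d (s t))
          = p ⬝ᵥ f (s t) + p ⬝ᵥ (g (s t)).mulVec (u (s t)) + p ⬝ᵥ d (s t) := by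
        simp [dotProduct_add]
      rw [this]
      linarith
    have hrhs : (1 - η) * h (s t) - εmax ≥ -εmax / η := by
      have h1 : (1 - η) * h (s t) ≥ (1 - η) * (-εmax / η) :=
        mul_le_mul_of_nonneg_left ih (by linarith)
      have h2 : (1 - η) * (-εmax / η) - εmax = -εmax / η := by
        field_simp
        ring
      linarith
    linarith
end
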